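/- Let λ be a special type B partition of 2n+1. Row procedure: from the list of parts of λ delete all even entries; then repeatedly delete two equal adjacent entries occupying positions 2t and 2t−1 for some t ≥ 1, until no such pair remains; let the number of remaining entries be 2q_r+1. Column procedure: take the padded column list of λ (padded with zeros to even length); repeatedly delete two equal adjacent entries at positions 2t+1 and 2t until no such pair remains; then repeatedly delete two equal adjacent entries of even value at positions 2t and 2t−1 until no such pair remains; let the number of remaining entries be 2q_c+2. Then both counts are independent of the choices of deletions, and q_r = q_c. (This common value q is the rank of the Lusztig quotient Ā(O) ≅ (ℤ/2ℤ)^q of the corresponding special orbit O of SO(2n+1,ℂ); the statement is the agreement of the row description and the column description of Ā(O).) -/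

import Mathlib

/-- `l` is a partition of `N`: a weakly decreasing list of positive integers with sum `N`. -/
def IsPartitionOf (N : ℕ) (l : List ℕ) : Prop :=
  l.Pairwise (· ≥ ·) ∧ (∀ x ∈ l, 0 < x) ∧ l.sum = N

/-- the `j`-th column length `c_j(λ) = #{i : λ_i ≥ j}`. -/
def colLen (l : List ℕ) (j : ℕ) : ℕ := l.countP (fun x => decide (j ≤ x))

/-- the transpose partition, as the list `c_1 ≥ c_2 ≥ ⋯ ≥ c_{λ_1}` of column lengths. -/
def transposeList (l : List ℕ) : List ℕ :=
  (List.range (l.foldr max 0)).map (fun j => colLen l (j + 1))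

/-- pad a list with one zero at the end if necessary so that its length is even. -/
def padToEven (c : List ℕ) : List ℕ := if Even c.length then c else c ++ [0]

/-- Delete two equal adjacent entries occupying positions `2t+1` and `2t` for some `t ≥ 0`
(positions in a list of length `m` are numbered `m-1, …, 1, 0` from first to last). -/
def delStepE (L L' : List ℕ) : Prop :=
  ∃ (a : ℕ) (l₁ l₂ : List ℕ), Even l₂.length ∧ L = l₁ ++ a :: a :: l₂ ∧ L' = l₁ ++ l₂

/-- Delete two equal adjacent entries occupying positions `2t` and `2t-1` for some `t ≥ 1`. -/
def delStepO (L L' : List ℕ) : Prop :=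
  ∃ (a : ℕ) (l₁ l₂ : List ℕ), Odd l₂.length ∧ L = l₁ ++ a :: a :: l₂ ∧ L' = l₁ ++ l₂

/-- Delete two equal adjacent entries of even value at positions `2t` and `2t-1`, `t ≥ 1`. -/
def delStepOEvenVal (L L' : List ℕ) : Prop :=
  ∃ (a : ℕ) (l₁ l₂ : List ℕ),
    Even a ∧ Odd l₂.length ∧ L = l₁ ++ a :: a :: l₂ ∧ L' = l₁ ++ l₂

/-!
Deleting two adjacent entries does not change the parity of the position of any other entry, so
each procedure only deletes blocks of one fixed partition of the list into blocks of two
consecutive entries, namely the blocks whose two entries are equal (and even, in the second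
column step). Hence the result does not depend on the choices.

Both counts are expressed through `A`, the number of odd parts `v` whose column length `c_v` is
odd. Even parts have even multiplicity, so they do not change the parity of `c_v`; in the sorted
list of odd parts, `c_v` is odd exactly when the last `v` is the first entry of a block of two
distinct entries or the final entry, so the row procedure leaves `2A - 1` entries. The blocks of
the padded column list are `(c_{2i+1}, c_{2i+2})`. By speciality, the second entry `b` of a
surviving block, if even and positive, is the first entry of the next surviving block, and the
second step deletes this pair `b, b`; so the column procedure leaves `2B` entries, `B` being the
number of blocks with `c_{2i+1} > c_{2i+2}` and `c_{2i+2}` odd or zero. Since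
`c_{2i} ≡ c_{2i+1} (mod 2)` for type B, a telescoping parity count gives `B + [c_1 odd] = A + 1`,
the `1` counting the block where the columns end (the largest part is odd, by speciality).
Finally `c_1`, the number of parts, is odd, so `B = A`.
-/

section PairDeletion

variable {α : Type*} [DecidableEq α] (p : α → Prop) [DecidablePred p]

def pairFilter : List α → List α
  | [] => []
  | [a] => [a]
  | a :: b :: l => if a = b ∧ p a then pairFilter l else a :: b :: pairFilter l

def pairFilterTail : List α → List α
  | [] => []
  | a :: l => a :: pairFilter p l

def AlignedPairDel (L L' : List α) : Prop :=
  ∃ a l₁ l₂, p a ∧ Even l₁.length ∧ L = l₁ ++ a :: a :: l₂ ∧ L' = l₁ ++ l₂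

def countPairs (r : α → α → Prop) [DecidableRel r] : List α → ℕ
  | [] => 0
  | [_] => 0
  | a :: b :: l => (if r a b then 1 else 0) + countPairs r l

variable {p}

theorem pairFilter_append_pair {a : α} (ha : p a) {l₂ : List α} :
    ∀ {l₁ : List α}, Even l₁.length →
      pairFilter p (l₁ ++ a :: a :: l₂) = pairFilter p (l₁ ++ l₂)
  | [], _ => by simp [pairFilter, ha]
  | [_], h => by simp at h
  | x :: y :: l₁, h => by
    simp only [List.cons_append, pairFilter,
      pairFilter_append_pair ha (l₁ := l₁) (by simpa [parity_simps] using h)]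

theorem pairFilter_eq_self : ∀ {L : List α}, (∀ L', ¬ AlignedPairDel p L L') → pairFilter p L = L
  | [], _ => rfl
  | [_], _ => rfl
  | a :: b :: l, h => by
    have hab : ¬ (a = b ∧ p a) := by
      rintro ⟨rfl, ha⟩
      exact h l ⟨a, [], l, ha, ⟨0, rfl⟩, rfl, rfl⟩
    have hl : ∀ L', ¬ AlignedPairDel p l L' := by
      rintro _ ⟨c, l₁, l₂, hc, h₁, rfl, rfl⟩
      exact h _ ⟨c, a :: b :: l₁, l₂, hc, by simpa [parity_simps] using h₁, rfl, rfl⟩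
    simp only [pairFilter, if_neg hab, pairFilter_eq_self hl]

theorem length_pairFilter : ∀ L : List α,
    (pairFilter p L).length = 2 * countPairs (fun a b => ¬ (a = b ∧ p a)) L + L.length % 2
  | [] => rfl
  | [_] => rfl
  | a :: b :: l => by
    by_cases h : a = b ∧ p a
    · simp only [pairFilter, countPairs, if_pos h, if_neg (not_not_intro h),
        length_pairFilter l, List.length_cons]
      omega
    · simp only [pairFilter, countPairs, if_neg h, if_pos h, List.length_cons,
        length_pairFilter l]
      omega

theorem eq_append_pairFilter_of_reflTransGen {r : List α → List α → Prop} {pre L M : List α}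
    (hr : ∀ {L₁ L₂}, L₁.length % 2 = L.length % 2 →
      (r (pre ++ L₁) L₂ ↔ ∃ L₃, AlignedPairDel p L₁ L₃ ∧ L₂ = pre ++ L₃))
    (h : Relation.ReflTransGen r (pre ++ L) M) (hM : ∀ M', ¬ r M M') :
    M = pre ++ pairFilter p L := by
  have key : ∀ {N}, Relation.ReflTransGen r (pre ++ L) N →
      ∃ K, N = pre ++ K ∧ K.length % 2 = L.length % 2 ∧ pairFilter p K = pairFilter p L := by
    intro N hN
    induction hN with
    | refl => exact ⟨L, rfl, rfl, rfl⟩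
    | tail _ hstep ih =>
      obtain ⟨K, rfl, hpar, hK⟩ := ih
      obtain ⟨_, ⟨a, l₁, l₂, ha, h₁, rfl, rfl⟩, rfl⟩ := (hr hpar).1 hstep
      refine ⟨l₁ ++ l₂, rfl, ?_, ?_⟩
      · simp only [List.length_append, List.length_cons] at hpar ⊢
        omega
      · rw [← hK, pairFilter_append_pair ha h₁]
  obtain ⟨K, rfl, hpar, hK⟩ := key h
  rw [← hK, pairFilter_eq_self fun K' hK' => hM _ ((hr hpar).2 ⟨K', hK', rfl⟩)]

theorem eq_pairFilter_of_reflTransGen {r : List α → List α → Prop} {L M : List α}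
    (hr : ∀ {L₁ L₂}, L₁.length % 2 = L.length % 2 → (r L₁ L₂ ↔ AlignedPairDel p L₁ L₂))
    (h : Relation.ReflTransGen r L M) (hM : ∀ M', ¬ r M M') : M = pairFilter p L :=
  eq_append_pairFilter_of_reflTransGen (pre := []) (fun hpar => by simpa using hr hpar) h hM

theorem pairFilter_eq_nil_of_forall_eq {c : α} (hc : p c) :
    ∀ {L : List α}, (∀ x ∈ L, x = c) → Even L.length → pairFilter p L = []
  | [], _, _ => rfl
  | [_], _, he => by simp at he
  | x :: y :: L, h, he => by
    obtain rfl := h x (by simp)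
    obtain rfl := h y (by simp)
    rw [pairFilter, if_pos ⟨rfl, hc⟩]
    exact pairFilter_eq_nil_of_forall_eq hc (fun z hz => h z (by simp [hz]))
      (by simpa [Nat.even_add_one] using he)

theorem countPairs_eq_zero_of_pairFilter_eq_nil {r : α → α → Prop} [DecidableRel r]
    (hr : ∀ a, ¬ r a a) : ∀ {L : List α}, pairFilter (fun _ => True) L = [] → countPairs r L = 0
  | [], _ => rfl
  | [_], h => by simp [pairFilter] at h
  | a :: b :: L, h => by
    by_cases hab : a = b
    · subst hab
      rw [pairFilter, if_pos ⟨rfl, trivial⟩] at h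
      simp [countPairs, hr, countPairs_eq_zero_of_pairFilter_eq_nil hr h]
    · rw [pairFilter, if_neg fun h => hab h.1] at h
      simp at h

end PairDeletion

section Procedures

theorem delStepO_iff_alignedPairDel {L L' : List ℕ} (hL : Odd L.length) :
    delStepO L L' ↔ AlignedPairDel (fun _ => True) L L' := by
  constructor
  · rintro ⟨a, l₁, l₂, h₂, rfl, rfl⟩
    refine ⟨a, l₁, l₂, trivial, ?_, rfl, rfl⟩
    simp only [List.length_append, List.length_cons, Nat.odd_iff, Nat.even_iff] at hL h₂ ⊢
    omega
  · rintro ⟨a, l₁, l₂, -, h₁, rfl, rfl⟩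
    refine ⟨a, l₁, l₂, ?_, rfl, rfl⟩
    simp only [List.length_append, List.length_cons, Nat.odd_iff, Nat.even_iff] at hL h₁ ⊢
    omega

theorem delStepE_iff_alignedPairDel {L L' : List ℕ} (hL : Even L.length) :
    delStepE L L' ↔ AlignedPairDel (fun _ => True) L L' := by
  constructor
  · rintro ⟨a, l₁, l₂, h₂, rfl, rfl⟩
    refine ⟨a, l₁, l₂, trivial, ?_, rfl, rfl⟩
    simp only [List.length_append, List.length_cons, Nat.even_iff] at hL h₂ ⊢
    omega
  · rintro ⟨a, l₁, l₂, -, h₁, rfl, rfl⟩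
    refine ⟨a, l₁, l₂, ?_, rfl, rfl⟩
    simp only [List.length_append, List.length_cons, Nat.even_iff] at hL h₁ ⊢
    omega

theorem delStepOEvenVal_cons_iff {x : ℕ} {w L' : List ℕ} (hw : Odd w.length) :
    delStepOEvenVal (x :: w) L' ↔ ∃ w', AlignedPairDel Even w w' ∧ L' = x :: w' := by
  constructor
  · rintro ⟨a, l₁, l₂, ha, h₂, hL, rfl⟩
    obtain _ | ⟨y, l₁⟩ := l₁
    · have := congrArg List.length hL
      simp only [List.length_cons, List.nil_append, Nat.odd_iff] at this hw h₂
      omega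
    · simp only [List.cons_append, List.cons.injEq] at hL
      obtain ⟨rfl, rfl⟩ := hL
      refine ⟨_, ⟨a, l₁, l₂, ha, ?_, rfl, rfl⟩, rfl⟩
      simp only [List.length_append, List.length_cons, Nat.odd_iff, Nat.even_iff] at hw h₂ ⊢
      omega
  · rintro ⟨_, ⟨a, l₁, l₂, ha, h₁, rfl, rfl⟩, rfl⟩
    refine ⟨a, x :: l₁, l₂, ha, ?_, rfl, rfl⟩
    simp only [List.length_append, List.length_cons, Nat.odd_iff, Nat.even_iff] at hw h₁ ⊢
    omega

theorem eq_pairFilter_of_delStepO {F M : List ℕ} (hF : Odd F.length)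
    (h : Relation.ReflTransGen delStepO F M) (hM : ∀ M', ¬ delStepO M M') :
    M = pairFilter (fun _ => True) F :=
  eq_pairFilter_of_reflTransGen
    (fun hpar => delStepO_iff_alignedPairDel (by rw [Nat.odd_iff] at hF ⊢; omega)) h hM

theorem eq_pairFilterTail_of_delStepE_of_delStepOEvenVal {C M₁ M₂ : List ℕ} (hC : Even C.length)
    (h₁ : Relation.ReflTransGen delStepE C M₁) (hM₁ : ∀ M', ¬ delStepE M₁ M')
    (h₂ : Relation.ReflTransGen delStepOEvenVal M₁ M₂) (hM₂ : ∀ M', ¬ delStepOEvenVal M₂ M') :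
    M₂ = pairFilterTail Even (pairFilter (fun _ => True) C) := by
  have hpar := length_pairFilter (p := fun _ => True) C
  rw [eq_pairFilter_of_reflTransGen
    (fun hpar => delStepE_iff_alignedPairDel (by rw [Nat.even_iff] at hC ⊢; omega)) h₁ hM₁] at h₂
  rcases hP : pairFilter (fun _ => True) C with _ | ⟨x, w⟩
  · rw [hP] at h₂
    rcases Relation.ReflTransGen.cases_head h₂ with rfl | ⟨_, ⟨_, l₁, _, _, _, h, _⟩, _⟩
    · rfl
    · simp at h
  · rw [hP] at h₂ hpar
    have hw : Odd w.length := by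
      rw [Nat.even_iff] at hC
      simp only [List.length_cons, hC, Nat.odd_iff] at hpar ⊢
      omega
    exact eq_append_pairFilter_of_reflTransGen (pre := [x])
      (fun {L₁ _} h => delStepOEvenVal_cons_iff (w := L₁) (by rw [Nat.odd_iff] at hw ⊢; omega))
      h₂ hM₂

end Procedures

section ColumnLengths

theorem colLen_eq_colLen_succ_add_count (l : List ℕ) (v : ℕ) :
    colLen l v = colLen l (v + 1) + l.count v := by
  induction l with
  | nil => rfl
  | cons x l ih =>
    simp only [colLen, List.countP_cons, List.count_cons, beq_iff_eq, decide_eq_true_eq] at ih ⊢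
    split_ifs <;> omega

theorem lt_colLen_iff_mem (l : List ℕ) (v : ℕ) : colLen l (v + 1) < colLen l v ↔ v ∈ l := by
  rw [colLen_eq_colLen_succ_add_count l v, ← List.count_pos_iff]
  omega

theorem colLen_antitone (l : List ℕ) : Antitone (colLen l) :=
  fun _ _ h => List.countP_mono_left fun _ _ hx => by simp only [decide_eq_true_eq] at hx ⊢; omega

theorem colLen_cons (x : ℕ) (l : List ℕ) (v : ℕ) :
    colLen (x :: l) v = colLen l v + if v ≤ x then 1 else 0 := by
  simp [colLen, List.countP_cons]

theorem colLen_eq_zero_of_forall_lt {l : List ℕ} {v : ℕ} (h : ∀ x ∈ l, x < v) : colLen l v = 0 :=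
  List.countP_eq_zero.2 fun x hx => by simpa using h x hx

theorem le_getD_iff_lt_colLen {l : List ℕ} (hl : l.Pairwise (· ≥ ·)) {v : ℕ} (hv : 0 < v) :
    ∀ i, v ≤ l.getD i 0 ↔ i < colLen l v := by
  induction l with
  | nil => intro i; simp only [List.getD_nil, colLen, List.countP_nil]; omega
  | cons x l ih =>
    obtain ⟨hx, hl⟩ := List.pairwise_cons.1 hl
    have hcons := colLen_cons x l v
    by_cases hvx : v ≤ x
    · rintro (_ | i)
      · simp [hvx, hcons]
      · rw [List.getD_cons_succ, ih hl, hcons, if_pos hvx]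
        omega
    · have hzero : colLen l v = 0 :=
        colLen_eq_zero_of_forall_lt fun y hy => (hx y hy).trans_lt (not_le.1 hvx)
      rintro (_ | i)
      · simp [hvx, hcons, hzero]
      · rw [List.getD_cons_succ, ih hl, hcons, if_neg hvx, hzero]
        omega

theorem colLen_eq_zero_iff (l : List ℕ) {j : ℕ} (hj : 0 < j) :
    colLen l j = 0 ↔ l.foldr max 0 < j := by
  simp only [colLen, List.countP_eq_zero, decide_eq_true_eq, not_le]
  refine ⟨fun h => ?_, fun h x hx => (List.le_max_of_le' 0 hx le_rfl).trans_lt h⟩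
  have := List.max_le_of_forall_le l (j - 1) fun x hx => by have := h x hx; omega
  exact Nat.lt_of_le_pred hj this

theorem getD_padToEven_transposeList (l : List ℕ) (j : ℕ) :
    (padToEven (transposeList l)).getD j 0 = colLen l (j + 1) := by
  have hT : (transposeList l).getD j 0 = colLen l (j + 1) := by
    rw [transposeList, List.getD_eq_getElem?_getD, List.getElem?_map]
    by_cases hj : j < l.foldr max 0
    · simp [hj]
    · simp [hj, (colLen_eq_zero_iff l j.succ_pos).2 (by omega)]
  unfold padToEven
  split_ifs
  · exact hT
  · rw [← hT]
    rcases lt_trichotomy j (transposeList l).length with h | rfl | h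
    · rw [List.getD_append _ _ _ _ h]
    · simp
    · simp [List.getD_eq_getElem?_getD, List.getElem?_eq_none, h.le, Nat.succ_le_of_lt h]

theorem pairwise_padToEven_transposeList (l : List ℕ) :
    (padToEven (transposeList l)).Pairwise (· ≥ ·) := by
  have hT : (transposeList l).Pairwise (· ≥ ·) :=
    List.pairwise_map.2 (List.pairwise_lt_range.imp fun h => colLen_antitone l (by omega))
  unfold padToEven
  split_ifs
  · exact hT
  · exact List.pairwise_append.2 ⟨hT, by simp, by simp⟩

theorem even_length_padToEven (c : List ℕ) : Even (padToEven c).length := by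
  unfold padToEven
  split_ifs with h
  · exact h
  · simpa [Nat.even_add_one] using h

theorem foldr_max_le_length_padToEven (l : List ℕ) :
    l.foldr max 0 ≤ (padToEven (transposeList l)).length := by
  unfold padToEven transposeList
  split_ifs <;> simp

theorem getD_le_foldr_max (l : List ℕ) (i : ℕ) : l.getD i 0 ≤ l.foldr max 0 := by
  by_cases hi : i < l.length
  · rw [List.getD_eq_getElem _ _ hi]
    exact List.le_max_of_le' 0 (List.getElem_mem hi) le_rfl
  · rw [List.getD_eq_default _ _ (by omega)]
    exact Nat.zero_le _

theorem countP_lt_range {K M : ℕ} (h : K ≤ M) : (List.range M).countP (· < K) = K := by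
  obtain ⟨d, rfl⟩ := Nat.exists_eq_add_of_le h
  rw [List.range_add, List.countP_append, List.countP_eq_length.2 (by simp),
    List.countP_eq_zero.2 (by simp), List.length_range, add_zero]

theorem colLen_transposeList {l : List ℕ} (hl : l.Pairwise (· ≥ ·)) {a : ℕ} (ha : 0 < a) :
    colLen (transposeList l) a = l.getD (a - 1) 0 := by
  rw [colLen, transposeList, List.countP_map]
  calc _ = (List.range (l.foldr max 0)).countP (· < l.getD (a - 1) 0) := by
        refine List.countP_congr fun j _ => ?_
        have := le_getD_iff_lt_colLen hl (show 0 < j + 1 by omega) (a - 1)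
        simp only [Function.comp_apply, decide_eq_true_eq]
        omega
    _ = _ := countP_lt_range (getD_le_foldr_max l _)

theorem count_transposeList_add_getD {l : List ℕ} (hl : l.Pairwise (· ≥ ·)) {a : ℕ}
    (ha : 0 < a) : (transposeList l).count a + l.getD a 0 = l.getD (a - 1) 0 := by
  have := colLen_eq_colLen_succ_add_count (transposeList l) a
  rw [colLen_transposeList hl ha, colLen_transposeList hl a.succ_pos] at this
  simpa [add_comm] using this.symm

end ColumnLengths

section Parity

theorem even_countP_of_even_count {α : Type*} [DecidableEq α] {l : List α} {p : α → Prop}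
    [DecidablePred p] (h : ∀ x ∈ l, p x → Even (l.count x)) : Even (l.countP p) := by
  rw [← Finset.sum_filter_count_eq_countP]
  exact Finset.even_sum _ fun x hx => by
    simp only [Finset.mem_filter, List.mem_toFinset] at hx
    exact h x hx.1 hx.2

theorem odd_sum_iff_odd_countP_odd (l : List ℕ) : Odd l.sum ↔ Odd (l.countP (Odd ·)) := by
  induction l with
  | nil => simp
  | cons x l ih =>
    rw [List.sum_cons, List.countP_cons, Nat.odd_add', ← Nat.not_odd_iff_even, ih]
    by_cases hx : Odd x <;> simp [hx, Nat.odd_add_one]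

theorem even_count_of_forall_mem {α : Type*} [DecidableEq α] {l : List α} {P : α → Prop}
    (h : ∀ e ∈ l, P e → Even (l.count e)) {e : α} (he : P e) : Even (l.count e) := by
  by_cases hm : e ∈ l
  · exact h e hm he
  · simp [List.count_eq_zero_of_not_mem hm]

theorem odd_colLen_iff_odd_colLen_filter_odd {l : List ℕ}
    (hB : ∀ e ∈ l, Even e → Even (l.count e)) (v : ℕ) :
    Odd (colLen l v) ↔ Odd (colLen (l.filter (Odd ·)) v) := by
  have hsplit : colLen l v =
      colLen (l.filter (Odd ·)) v + colLen (l.filter (fun x => !decide (Odd x))) v := by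
    simp only [colLen, ← List.countP_append]
    exact ((List.filter_append_perm _ l).countP_eq _).symm
  have heven : Even (colLen (l.filter (fun x => !decide (Odd x))) v) := by
    refine even_countP_of_even_count fun x hx _ => ?_
    obtain ⟨hxl, hx⟩ := List.mem_filter.1 hx
    simp only [Bool.not_eq_eq_eq_not, Bool.not_true, decide_eq_false_iff_not,
      Nat.not_odd_iff_even] at hx
    rw [List.count_filter (by simpa using hx)]
    exact hB x hxl hx
  rw [hsplit, Nat.odd_add]
  simp only [heven, iff_true]

end Parity

section RowCount

theorem mem_filter_odd_colLen_cons_cons {a b : ℕ} {r : List ℕ}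
    (hG : (a :: b :: r).Pairwise (· ≥ ·)) (v : ℕ) :
    v ∈ (a :: b :: r).toFinset.filter (fun v => Odd (colLen (a :: b :: r) v)) ↔
      (v = a ∧ a ≠ b) ∨ v ∈ r.toFinset.filter (fun v => Odd (colLen r v)) := by
  simp only [List.pairwise_cons, List.mem_cons] at hG
  obtain ⟨ha, hb, -⟩ := hG
  have hba := ha b (Or.inl rfl)
  have hzero : ∀ w, w ∉ r → b ≤ w → colLen r w = 0 := fun w hw hbw =>
    colLen_eq_zero_of_forall_lt fun x hx =>
      lt_of_le_of_ne ((hb x hx).trans hbw) fun h => hw (h ▸ hx)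
  simp only [Finset.mem_filter, List.mem_toFinset, List.mem_cons, colLen_cons]
  by_cases hvr : v ∈ r
  · have hvb := hb v hvr
    rcases eq_or_ne v a with rfl | hva
    · obtain rfl : v = b := le_antisymm hvb hba
      simp [hvr, Nat.odd_add_one]
    · simp [hvr, hvb, hvb.trans hba, hva, Nat.odd_add_one]
  · by_cases hbv : b ≤ v
    · have hr0 := hzero v hvr hbv
      rcases eq_or_ne v a with rfl | hva
      · rcases eq_or_ne v b with rfl | hvb
        · simp [hvr, hr0]
        · simp [hr0, hvb, show ¬ v ≤ b by omega]
      · rcases eq_or_ne v b with rfl | hvb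
        · simp [hvr, hr0, hba, hva, Nat.odd_iff]
        · simp [hvr, hva, hvb]
    · simp [hvr, show v ≠ a by omega, show v ≠ b by omega]

theorem card_filter_odd_colLen : ∀ {G : List ℕ}, G.Pairwise (· ≥ ·) →
    (G.toFinset.filter fun v => Odd (colLen G v)).card = countPairs (· ≠ ·) G + G.length % 2
  | [], _ => rfl
  | [a], _ => by simp [colLen, countPairs, Finset.filter_singleton]
  | a :: b :: r, hG => by
    have ih := card_filter_odd_colLen (List.pairwise_cons.1 (List.pairwise_cons.1 hG).2).2
    have hmem := mem_filter_odd_colLen_cons_cons hG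
    by_cases hab : a = b
    · have hS : (a :: b :: r).toFinset.filter (fun v => Odd (colLen (a :: b :: r) v)) =
          r.toFinset.filter (fun v => Odd (colLen r v)) :=
        Finset.ext fun v => by rw [hmem]; simp [hab]
      rw [hS, ih]
      simp only [countPairs, if_neg (not_not_intro hab), List.length_cons]
      omega
    · have ha : a ∉ r.toFinset.filter (fun v => Odd (colLen r v)) := fun h => by
        have hb := (List.pairwise_cons.1 (List.pairwise_cons.1 hG).2).1 a
          (List.mem_toFinset.1 (Finset.mem_filter.1 h).1)
        exact hab (le_antisymm hb ((List.pairwise_cons.1 hG).1 b (by simp)))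
      have hS : (a :: b :: r).toFinset.filter (fun v => Odd (colLen (a :: b :: r) v)) =
          insert a (r.toFinset.filter (fun v => Odd (colLen r v))) :=
        Finset.ext fun v => by rw [hmem, Finset.mem_insert]; simp [hab]
      rw [hS, Finset.card_insert_of_notMem ha]
      simp only [countPairs, if_pos hab, List.length_cons, ih]
      omega

def oddPartsOddColLen (l : List ℕ) : Finset ℕ :=
  l.toFinset.filter fun v => Odd v ∧ Odd (colLen l v)

theorem length_pairFilter_filter_odd {l : List ℕ} (hl : l.Pairwise (· ≥ ·)) (hsum : Odd l.sum)
    (hB : ∀ e ∈ l, Even e → Even (l.count e)) :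
    (pairFilter (fun _ => True) (l.filter (Odd ·))).length + 1 =
      2 * (oddPartsOddColLen l).card := by
  have hodd : (l.filter (Odd ·)).length % 2 = 1 := by
    rw [← List.countP_eq_length_filter, ← Nat.odd_iff, ← odd_sum_iff_odd_countP_odd]
    exact hsum
  have hS : oddPartsOddColLen l =
      (l.filter (Odd ·)).toFinset.filter fun v => Odd (colLen (l.filter (Odd ·)) v) :=
    Finset.ext fun v => by
      simp only [oddPartsOddColLen, Finset.mem_filter, List.mem_toFinset, List.mem_filter,
        decide_eq_true_eq, odd_colLen_iff_odd_colLen_filter_odd hB, and_assoc]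
  rw [length_pairFilter, hS, card_filter_odd_colLen (hl.filter _), hodd]
  simp only [and_true, ne_eq]
  omega

end RowCount

section ColumnCount

theorem countPairs_eq_card_filter_range {α : Type*} (r : α → α → Prop) [DecidableRel r]
    (d : α) : ∀ {m : ℕ} {C : List α}, C.length = 2 * m →
      countPairs r C =
        ((Finset.range m).filter fun i => r (C.getD (2 * i) d) (C.getD (2 * i + 1) d)).card
  | 0, [], _ => rfl
  | m + 1, a :: b :: C, hC => by
    simp only [List.length_cons] at hC
    rw [countPairs, countPairs_eq_card_filter_range r d (m := m) (by omega),
      Finset.card_filter, Finset.card_filter, Finset.sum_range_succ']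
    have h₂ : ∀ i, 2 * (i + 1) = 2 * i + 1 + 1 := fun i => by ring
    simp only [h₂, List.getD_cons_succ, List.getD_cons_zero, mul_zero, zero_add]
    ring
  | 0, _ :: _, hC | m + 1, [], hC | m + 1, [_], hC => by
    simp only [List.length_cons, List.length_nil] at hC
    omega

theorem countPairs_padToEven_transposeList_eq_card_oddPartsOddColLen {l : List ℕ} :
    countPairs (fun a b => b < a ∧ Odd a) (padToEven (transposeList l)) =
      (oddPartsOddColLen l).card := by
  obtain ⟨m, hm⟩ := even_length_padToEven (transposeList l)
  have hmax := foldr_max_le_length_padToEven l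
  rw [countPairs_eq_card_filter_range _ 0 (m := m) (by omega)]
  simp only [getD_padToEven_transposeList]
  refine Finset.card_nbij' (fun i => 2 * i + 1) (fun v => v / 2) ?_ ?_ ?_ ?_
  · intro i hi
    simp only [Finset.coe_filter, Finset.mem_range, Set.mem_ofPred_eq] at hi
    simp only [oddPartsOddColLen, Finset.coe_filter, List.mem_toFinset, Set.mem_ofPred_eq]
    exact ⟨(lt_colLen_iff_mem l _).1 hi.2.1, odd_two_mul_add_one i, hi.2.2⟩
  · intro v hv
    simp only [oddPartsOddColLen, Finset.coe_filter, List.mem_toFinset, Set.mem_ofPred_eq] at hv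
    obtain ⟨hvl, ⟨k, rfl⟩, hodd⟩ := hv
    have := List.le_max_of_le' 0 hvl le_rfl
    simp only [Finset.coe_filter, Finset.mem_range, Set.mem_ofPred_eq]
    refine ⟨by omega, ?_, ?_⟩ <;> rw [show 2 * ((2 * k + 1) / 2) + 1 = 2 * k + 1 by omega]
    · exact (lt_colLen_iff_mem l _).2 hvl
    · exact hodd
  · intro i _
    simp only
    omega
  · intro v hv
    simp only [oddPartsOddColLen, Finset.coe_filter, Set.mem_ofPred_eq] at hv
    obtain ⟨k, rfl⟩ := hv.2.1
    simp only
    omega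

theorem countPairs_padToEven_transposeList_zero_eq_one {l : List ℕ} (hodd : Odd (l.foldr max 0)) :
    countPairs (fun a b => b = 0 ∧ 0 < a) (padToEven (transposeList l)) = 1 := by
  obtain ⟨m, hm⟩ := even_length_padToEven (transposeList l)
  have hmax := foldr_max_le_length_padToEven l
  obtain ⟨k, hk⟩ := hodd
  rw [countPairs_eq_card_filter_range _ 0 (m := m) (by omega), Finset.card_eq_one]
  refine ⟨k, Finset.ext fun i => ?_⟩
  simp only [getD_padToEven_transposeList, Finset.mem_filter, Finset.mem_range,
    Finset.mem_singleton, Nat.pos_iff_ne_zero, ne_eq,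
    colLen_eq_zero_iff l (show 0 < 2 * i + 1 + 1 by omega),
    colLen_eq_zero_iff l (show 0 < 2 * i + 1 by omega)]
  omega

theorem countPairs_telescope : ∀ {C : List ℕ}, C.Pairwise (· ≥ ·) → Even C.length →
    (∀ j, Odd j → (Even (C.getD j 0) ↔ Even (C.getD (j + 1) 0))) →
    countPairs (fun a b => b < a ∧ Odd a) C + countPairs (fun a b => b = 0 ∧ 0 < a) C =
      countPairs (fun a b => b < a ∧ (Odd b ∨ b = 0)) C + if Odd (C.headD 0) then 1 else 0
  | [], _, _, _ => by simp [countPairs]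
  | [_], _, he, _ => by simp at he
  | a :: b :: r, hs, he, hC => by
    have hba : b ≤ a := (List.pairwise_cons.1 hs).1 b (by simp)
    have ih := countPairs_telescope (List.pairwise_cons.1 (List.pairwise_cons.1 hs).2).2
      (by simpa [Nat.even_add_one] using he) fun j hj => by
        simpa using hC (j + 2) (by simpa [Nat.odd_add] using hj)
    have hlink : Even b ↔ Even (r.headD 0) := by
      simpa [List.getD_eq_getElem?_getD, List.head?_eq_getElem?] using hC 1 odd_one
    simp only [countPairs, List.headD_cons]
    rw [← Nat.not_odd_iff_even, ← Nat.not_odd_iff_even, not_iff_not] at hlink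
    simp only [← hlink] at ih
    simp only [Nat.odd_iff] at ih ⊢
    split_ifs at ih ⊢ <;> omega

theorem head?_eq_of_mem_of_forall_le {α : Type*} [PartialOrder α] {C : List α} {v : α}
    (hs : C.Pairwise (· ≥ ·)) (hv : v ∈ C) (hmax : ∀ x ∈ C, x ≤ v) : C.head? = some v := by
  obtain _ | ⟨c, C⟩ := C
  · simp at hv
  · rcases List.mem_cons.1 hv with rfl | hv
    · rfl
    · simp [le_antisymm (hmax c (by simp)) ((List.pairwise_cons.1 hs).1 v hv)]

theorem pairFilter_eq_cons_of_odd_count {α : Type*} [DecidableEq α] [PartialOrder α]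
    {p : α → Prop} [DecidablePred p] {b : α} :
    ∀ {w : List α}, w.Pairwise (· ≥ ·) → (∀ x ∈ w, x ≤ b) → Odd (w.count b) →
      ∃ t, pairFilter p w = b :: t
  | [], _, _, hodd => by simp at hodd
  | [c], _, hb, hodd => by
    obtain rfl : c = b := by by_contra h; simp [h] at hodd
    exact ⟨[], rfl⟩
  | c :: d :: w, hs, hb, hodd => by
    obtain rfl : c = b := by
      simpa using head?_eq_of_mem_of_forall_le hs (List.count_pos_iff.1 hodd.pos) hb
    by_cases h : c = d ∧ p c
    · rw [pairFilter, if_pos h]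
      obtain ⟨rfl, -⟩ := h
      exact pairFilter_eq_cons_of_odd_count (List.pairwise_cons.1 (List.pairwise_cons.1 hs).2).2
        (fun x hx => hb x (by simp [hx])) (by simpa [Nat.odd_add_one] using hodd)
    · exact ⟨d :: pairFilter p w, by rw [pairFilter, if_neg h]⟩

theorem head?_eq_of_odd_count_of_cons_cons {a b : ℕ} {C : List ℕ}
    (hs : (a :: b :: C).Pairwise (· ≥ ·))
    (hC : ∀ v, Even v → 0 < v → Odd ((a :: b :: C).count v) → (a :: b :: C).head? = some v) :
    ∀ v, Even v → 0 < v → Odd (C.count v) → C.head? = some v := by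
  intro v hv h0 hodd
  have hvC : v ∈ C := List.count_pos_iff.1 hodd.pos
  have hbC : ∀ x ∈ C, x ≤ b := (List.pairwise_cons.1 (List.pairwise_cons.1 hs).2).1
  have hsC := (List.pairwise_cons.1 (List.pairwise_cons.1 hs).2).2
  by_cases hvb : v = b
  · exact head?_eq_of_mem_of_forall_le hsC hvC (hvb ▸ hbC)
  by_cases hva : v = a
  · have hba : b ≤ a := (List.pairwise_cons.1 hs).1 b (by simp)
    exact head?_eq_of_mem_of_forall_le hsC hvC fun x hx => (hbC x hx).trans (hva ▸ hba)
  · have := hC v hv h0 (by simpa [List.count_cons, Ne.symm hva, Ne.symm hvb] using hodd)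
    simp [Ne.symm hva] at this

theorem length_pairFilterTail_pairFilter : ∀ {C : List ℕ}, C.Pairwise (· ≥ ·) → Even C.length →
    (∀ v, Even v → 0 < v → Odd (C.count v) → C.head? = some v) →
    (pairFilterTail Even (pairFilter (fun _ => True) C)).length =
      2 * countPairs (fun a b => b < a ∧ (Odd b ∨ b = 0)) C
  | [], _, _, _ => rfl
  | [_], _, he, _ => by simp at he
  | a :: b :: C, hs, he, hC => by
    have hsC := (List.pairwise_cons.1 (List.pairwise_cons.1 hs).2).2
    have hbC : ∀ x ∈ C, x ≤ b := (List.pairwise_cons.1 (List.pairwise_cons.1 hs).2).1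
    have hba : b ≤ a := (List.pairwise_cons.1 hs).1 b (by simp)
    have heC : Even C.length := by simpa [Nat.even_add_one] using he
    have ih := length_pairFilterTail_pairFilter hsC heC (head?_eq_of_odd_count_of_cons_cons hs hC)
    rcases hba.eq_or_lt with rfl | hba
    · simpa [pairFilter, countPairs] using ih
    rw [pairFilter, if_neg fun h => hba.ne h.1.symm, countPairs]
    by_cases hb : Even b ∧ 0 < b
    -- `b` is repeated at the head of `C`, and the second step deletes the pair `b, b`
    · have hodd : Odd (C.count b) := by
        have := mt (hC b hb.1 hb.2) (by simpa using hba.ne')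
        simpa [List.count_cons, hba.ne', Nat.odd_add_one] using this
      obtain ⟨t, ht⟩ := pairFilter_eq_cons_of_odd_count (p := fun _ => True) hsC hbC hodd
      rw [ht] at ih ⊢
      have : ¬ (b < a ∧ (Odd b ∨ b = 0)) := by
        rintro ⟨-, hob | rfl⟩
        · exact Nat.not_even_iff_odd.2 hob hb.1
        · exact lt_irrefl 0 hb.2
      simpa [pairFilterTail, pairFilter, hb.1, this] using ih
    · have hpB : b < a ∧ (Odd b ∨ b = 0) := by
        refine ⟨hba, ?_⟩
        rcases Nat.even_or_odd b with hbe | hbo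
        · exact Or.inr (by by_contra h0; exact hb ⟨hbe, Nat.pos_of_ne_zero h0⟩)
        · exact Or.inl hbo
      rcases hP : pairFilter (fun _ => True) C with _ | ⟨x, t⟩
      · rw [countPairs_eq_zero_of_pairFilter_eq_nil (fun a h => lt_irrefl a h.1) hP]
        simp [pairFilterTail, pairFilter, hpB]
      · have hx : ¬ (b = x ∧ Even b) := by
          rintro ⟨rfl, hbe⟩
          obtain rfl : b = 0 := by by_contra h0; exact hb ⟨hbe, Nat.pos_of_ne_zero h0⟩
          have := pairFilter_eq_nil_of_forall_eq (p := fun _ => True) trivial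
            (fun y hy => Nat.le_zero.1 (hbC y hy)) heC
          simp [this] at hP
        rw [hP] at ih
        simp only [pairFilterTail, pairFilter, if_neg hx, if_pos hpB, List.length_cons] at ih ⊢
        omega

theorem odd_foldr_max {l : List ℕ} (hl : l.Pairwise (· ≥ ·)) (hsum : Odd l.sum)
    (hB : ∀ e ∈ l, Even e → Even (l.count e))
    (hspecial : ∀ e ∈ transposeList l, Even e → Even ((transposeList l).count e)) :
    Odd (l.foldr max 0) := by
  -- Otherwise let `w` be the largest odd part and `r = c_{w+1}` the number of parts above it:
  -- `r > 0` is even, and `r` occurs `λ_r - λ_{r+1} = λ_r - w` times among the column lengths,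
  -- an odd number since `λ_r > w` is even.
  by_contra hmax
  rw [Nat.not_odd_iff_even] at hmax
  obtain ⟨w, F, hF⟩ := List.exists_cons_of_ne_nil (l := l.filter (Odd ·)) fun h => by
    rw [odd_sum_iff_odd_countP_odd, List.countP_eq_length_filter, h] at hsum
    exact absurd hsum (by decide)
  have hwF : w ∈ l.filter (Odd ·) := hF ▸ List.mem_cons_self
  obtain ⟨hwl, hwo⟩ : w ∈ l ∧ Odd w := by simpa using hwF
  have hwmax : ∀ x ∈ l, Odd x → x ≤ w := fun x hx hxo => by
    have hxF : x ∈ w :: F := hF ▸ List.mem_filter.2 ⟨hx, by simpa using hxo⟩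
    rcases List.mem_cons.1 hxF with rfl | hxF
    · exact le_rfl
    · exact (List.pairwise_cons.1 (hF ▸ hl.filter _)).1 x hxF
  set r := colLen l (w + 1)
  have hr_even : Even r := even_countP_of_even_count fun x hx hwx => by
    refine hB x hx (Nat.not_odd_iff_even.1 fun hxo => ?_)
    have := hwmax x hx hxo
    omega
  have hr_pos : 0 < r := Nat.pos_of_ne_zero fun h0 => by
    have hlt := (colLen_eq_zero_iff l w.succ_pos).1 h0
    have hle := List.le_max_of_le' 0 hwl le_rfl
    exact Nat.not_even_iff_odd.2 hwo (le_antisymm (Nat.lt_succ_iff.1 hlt) hle ▸ hmax)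
  have hsplit := colLen_eq_colLen_succ_add_count l w
  have hcount_w := List.count_pos_iff.2 hwl
  have hrow_r : l.getD r 0 = w := by
    have h₁ := le_getD_iff_lt_colLen hl hwo.pos r
    have h₂ := le_getD_iff_lt_colLen hl (show 0 < w + 1 by omega) r
    omega
  have hrow_pred : w + 1 ≤ l.getD (r - 1) 0 :=
    (le_getD_iff_lt_colLen hl (by omega) (r - 1)).2 (by omega)
  have hrow_pred_even : Even (l.getD (r - 1) 0) := by
    have hlen : r - 1 < l.length := by
      have : r ≤ l.length := List.countP_le_length
      omega
    rw [List.getD_eq_getElem _ _ hlen] at hrow_pred ⊢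
    exact Nat.not_odd_iff_even.1 fun h => by
      have := hwmax _ (List.getElem_mem hlen) h
      omega
  have hT_odd : Odd ((transposeList l).count r) := by
    rw [← count_transposeList_add_getD hl hr_pos, hrow_r, Nat.even_add] at hrow_pred_even
    exact Nat.not_even_iff_odd.1 fun h => Nat.not_even_iff_odd.2 hwo (hrow_pred_even.1 h)
  exact Nat.not_even_iff_odd.2 hT_odd (hspecial r (List.count_pos_iff.1 hT_odd.pos) hr_even)

theorem length_pairFilterTail_padToEven_transposeList {l : List ℕ} (hl : l.Pairwise (· ≥ ·))
    (hsum : Odd l.sum) (hB : ∀ e ∈ l, Even e → Even (l.count e))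
    (hspecial : ∀ e ∈ transposeList l, Even e → Even ((transposeList l).count e)) :
    (pairFilterTail Even (pairFilter (fun _ => True) (padToEven (transposeList l)))).length =
      2 * (oddPartsOddColLen l).card := by
  have hs := pairwise_padToEven_transposeList l
  have he := even_length_padToEven (transposeList l)
  have hcount : ∀ v, Even v → 0 < v → Even ((padToEven (transposeList l)).count v) := by
    intro v hv h0
    unfold padToEven
    split_ifs
    · exact even_count_of_forall_mem hspecial hv
    · simpa [h0.ne] using even_count_of_forall_mem hspecial hv
  have hlink : ∀ j, Odd j → (Even ((padToEven (transposeList l)).getD j 0) ↔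
      Even ((padToEven (transposeList l)).getD (j + 1) 0)) := by
    intro j hj
    rw [getD_padToEven_transposeList, getD_padToEven_transposeList,
      colLen_eq_colLen_succ_add_count l (j + 1), Nat.even_add]
    simp only [even_count_of_forall_mem hB (Nat.even_add_one.2 (Nat.not_even_iff_odd.2 hj)),
      iff_true]
  have hhead : Odd ((padToEven (transposeList l)).headD 0) := by
    have : (padToEven (transposeList l)).headD 0 = colLen l 1 := by
      rw [← getD_padToEven_transposeList l 0]
      cases padToEven (transposeList l) <;> rfl
    rw [this, odd_colLen_iff_odd_colLen_filter_odd hB, colLen,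
      List.countP_eq_length.2 fun x hx => by
        simpa [Nat.one_le_iff_ne_zero, Nat.pos_iff_ne_zero] using
          (of_decide_eq_true (List.mem_filter.1 hx).2 : Odd x).pos,
      ← List.countP_eq_length_filter, ← odd_sum_iff_odd_countP_odd]
    exact hsum
  have htel := countPairs_telescope hs he hlink
  rw [countPairs_padToEven_transposeList_eq_card_oddPartsOddColLen,
    countPairs_padToEven_transposeList_zero_eq_one (odd_foldr_max hl hsum hB hspecial),
    if_pos hhead] at htel
  rw [length_pairFilterTail_pairFilter hs he fun v hv h0 hodd =>
    absurd (hcount v hv h0) (Nat.not_even_iff_odd.2 hodd)]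
  omega

end ColumnCount

/-- Let `l` be a special type B partition of `2n+1`.
Row procedure: delete all even entries from the list of parts, then repeatedly delete two
equal adjacent entries at positions `2t` and `2t-1` (`t ≥ 1`) until no such pair remains;
the remaining number of entries is `2q+1`.
Column procedure: take the padded column list (padded with zeros to even length);
repeatedly delete two equal adjacent entries at positions `2t+1` and `2t` until no such
pair remains; then repeatedly delete two equal adjacent entries of even value at positions
`2t` and `2t-1` until no such pair remains; the remaining number of entries is `2q+2`.
Both counts are independent of all choices, with the same `q`. -/
theorem typeB_LusztigQuotient_rows_eq_columns (n : ℕ) (l : List ℕ)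
    (hpart : IsPartitionOf (2 * n + 1) l)
    (hB : ∀ e ∈ l, Even e → Even (l.count e))
    (hspecial : ∀ e ∈ transposeList l, Even e → Even ((transposeList l).count e)) :
    ∃ q : ℕ,
      (∀ M : List ℕ,
        Relation.ReflTransGen delStepO (l.filter (fun x => decide (Odd x))) M →
        (∀ M', ¬ delStepO M M') → M.length = 2 * q + 1) ∧
      (∀ M₁ M₂ : List ℕ,
        Relation.ReflTransGen delStepE (padToEven (transposeList l)) M₁ →
        (∀ M', ¬ delStepE M₁ M') →
        Relation.ReflTransGen delStepOEvenVal M₁ M₂ →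
        (∀ M', ¬ delStepOEvenVal M₂ M') → M₂.length = 2 * q + 2) := by
  obtain ⟨hl, -, hsum⟩ := hpart
  have hodd : Odd l.sum := hsum ▸ odd_two_mul_add_one n
  have hrow := length_pairFilter_filter_odd hl hodd hB
  have hcol := length_pairFilterTail_padToEven_transposeList hl hodd hB hspecial
  refine ⟨(oddPartsOddColLen l).card - 1, fun M hM hMt => ?_, fun M₁ M₂ h₁ hM₁ h₂ hM₂ => ?_⟩
  · have hF : Odd (l.filter (Odd ·)).length := by
      rwa [← List.countP_eq_length_filter, ← odd_sum_iff_odd_countP_odd]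
    rw [eq_pairFilter_of_delStepO hF hM hMt]
    omega
  · rw [eq_pairFilterTail_of_delStepE_of_delStepOEvenVal (even_length_padToEven _) h₁ hM₁ h₂ hM₂]
    omega
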